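/- arXiv:1103.2926 — 2 statements merged into one kernel-verified Lean document; each statement's English description precedes it below -/
import Mathlib

section
/- Suppose for all finite P ⊂ ℝ^{2k} and all finite families L of k-flats in ℝ^{2k} with pairwise intersections of size at most one, we have |I(P,L)| ≤ A|P|^{2/3+ε}|L|^{2/3} + (3/2)|P| + (3/2)|L|. Then for any set 𝒜 of n pairwise-independent k×k real matrices (det(A-B) ≠ 0 for distinct A,B ∈ 𝒜) and any n-element sets V, W ⊂ ℝ^k, one has |V+W| + |𝒜W| ≥ c n^{5/4-ε'} for some constant c = c(k,ε) > 0 and ε' depending on ε. -/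
set_option maxHeartbeats 1000000

open Finset

private def ellSet {k : ℕ} (M : Matrix (Fin k) (Fin k) ℝ) (t : Fin k → ℝ) :
    Set ((Fin k → ℝ) × (Fin k → ℝ)) := {p | p.2 = M.mulVec p.1 - t}

private lemma mem_ellSet {k : ℕ} {M : Matrix (Fin k) (Fin k) ℝ} {t : Fin k → ℝ}
    {p : (Fin k → ℝ) × (Fin k → ℝ)} : p ∈ ellSet M t ↔ p.2 = M.mulVec p.1 - t := Iff.rfl

private lemma ellSet_inj {k : ℕ} {M M' : Matrix (Fin k) (Fin k) ℝ} {t t' : Fin k → ℝ}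
    (h : ellSet M t = ellSet M' t') : M = M' ∧ t = t' := by
  have key : ∀ x, M.mulVec x - t = M'.mulVec x - t' := by
    intro x
    have hx : (x, M.mulVec x - t) ∈ ellSet M t := rfl
    rw [h] at hx
    exact hx
  have ht : t = t' := by
    have := key 0
    simpa [Matrix.mulVec_zero] using this
  subst ht
  refine ⟨?_, rfl⟩
  have hmv : ∀ x, M.mulVec x = M'.mulVec x := by
    intro x
    have hx := key x
    have : M.mulVec x - t + t = M'.mulVec x - t + t := by rw [hx]
    simpa using this
  ext i j
  have := congrFun (hmv (Pi.single j 1)) i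
  simpa [Matrix.mulVec_single] using this

private lemma mulVec_inj {k : ℕ} {M : Matrix (Fin k) (Fin k) ℝ} (h : M.det ≠ 0) :
    Function.Injective M.mulVec := by
  intro x y hxy
  have hu : IsUnit M.det := isUnit_iff_ne_zero.mpr h
  have := congrArg (M⁻¹.mulVec) hxy
  rwa [Matrix.mulVec_mulVec, Matrix.mulVec_mulVec, Matrix.nonsing_inv_mul M hu,
    Matrix.one_mulVec, Matrix.one_mulVec] at this

private lemma ellSet_affine {k : ℕ} (M : Matrix (Fin k) (Fin k) ℝ) (t : Fin k → ℝ) :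
    ∃ s : AffineSubspace ℝ ((Fin k → ℝ) × (Fin k → ℝ)),
      ellSet M t = (s : Set ((Fin k → ℝ) × (Fin k → ℝ))) ∧
      Module.finrank ℝ s.direction = k := by
  refine ⟨AffineSubspace.mk' (0, -t) (LinearMap.graph M.mulVecLin), ?_, ?_⟩
  · ext p
    simp only [ellSet, Set.mem_setOf_eq, SetLike.mem_coe,
      AffineSubspace.mem_mk', vsub_eq_sub, LinearMap.mem_graph_iff]
    constructor
    · intro hp
      simp only [Prod.snd_sub, Prod.fst_sub, hp, Matrix.mulVecLin_apply]
      simp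
    · intro hp
      have h2 : p.2 - -t = M.mulVec (p.1 - 0) := hp
      simp only [sub_neg_eq_add, sub_zero] at h2
      rw [eq_sub_iff_add_eq]
      exact h2
  · rw [AffineSubspace.direction_mk']
    have hgr : LinearMap.graph (Matrix.mulVecLin M) = LinearMap.range (LinearMap.prod LinearMap.id M.mulVecLin) := by
      ext x
      simp only [LinearMap.mem_graph_iff, LinearMap.mem_range, LinearMap.prod_apply,
        Pi.prod, LinearMap.id_apply]
      constructor
      · intro hx; exact ⟨x.1, by ext <;> simp [hx.symm]⟩
      · rintro ⟨y, rfl⟩; rfl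
    rw [hgr, LinearMap.finrank_range_of_inj, Module.finrank_fin_fun]
    intro a b hab
    simpa using congrArg Prod.fst hab

private lemma ellSet_inter {k : ℕ} {M M' : Matrix (Fin k) (Fin k) ℝ} {t t' : Fin k → ℝ}
    (hMM : M = M' → t ≠ t') (hdet : M ≠ M' → (M - M').det ≠ 0) :
    (ellSet M t ∩ ellSet M' t').Subsingleton := by
  rintro ⟨x, y⟩ ⟨hp, hp'⟩ ⟨x', y'⟩ ⟨hq, hq'⟩
  simp only [ellSet, Set.mem_setOf_eq] at hp hp' hq hq'
  by_cases hM : M = M'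
  · exfalso
    subst hM
    apply hMM rfl
    have h1 : M.mulVec x - t = M.mulVec x - t' := hp.symm.trans hp'
    exact sub_right_injective h1
  · have hd := hdet hM
    have h1 : (M - M').mulVec x = t - t' := by
      rw [Matrix.sub_mulVec]
      have h := hp.symm.trans hp'
      exact sub_eq_sub_iff_sub_eq_sub.mp h
    have h2 : (M - M').mulVec x' = t - t' := by
      rw [Matrix.sub_mulVec]
      have h := hq.symm.trans hq'
      exact sub_eq_sub_iff_sub_eq_sub.mp h
    have hx : x = x' := mulVec_inj hd (h1.trans h2.symm)
    subst hx
    simp [Prod.ext_iff, hp, hq]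

private lemma sum_image_card {k n : ℕ} (hn : 1 ≤ n) (𝒜 : Finset (Matrix (Fin k) (Fin k) ℝ))
    (V : Finset (Fin k → ℝ)) (h𝒜 : 𝒜.card = n) (hV : V.card = n)
    (hdet : ∀ M ∈ 𝒜, ∀ M' ∈ 𝒜, M ≠ M' → (M - M').det ≠ 0) :
    ((n : ℝ))^2 ≤ 2 * ∑ M ∈ 𝒜, ((V.image M.mulVec).card : ℝ) := by
  classical
  set c : Matrix (Fin k) (Fin k) ℝ → ℕ :=
    fun M => ((V ×ˢ V).filter (fun p => M.mulVec p.1 = M.mulVec p.2)).card with hc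
  set r : Matrix (Fin k) (Fin k) ℝ → ℕ := fun M => (V.image M.mulVec).card with hr
  have hper : ∀ M, n^2 ≤ r M * c M := by
    intro M
    have hfib : V.card = ∑ t ∈ V.image M.mulVec, (V.filter (fun v => M.mulVec v = t)).card :=
      card_eq_sum_card_fiberwise (fun v hv => mem_image_of_mem _ hv)
    have hfib2 : c M = ∑ t ∈ V.image M.mulVec,
        ((V.filter (fun v => M.mulVec v = t)).card)^2 := by
      show ((V ×ˢ V).filter (fun p => M.mulVec p.1 = M.mulVec p.2)).card = _
      rw [card_eq_sum_card_fiberwise (f := fun p => M.mulVec p.1) (t := V.image M.mulVec)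
        (fun p hp => Finset.mem_image.mpr ⟨p.1, (mem_product.mp (mem_filter.mp hp).1).1, rfl⟩)]
      refine Finset.sum_congr rfl (fun t ht => ?_)
      have : ((V ×ˢ V).filter (fun p => M.mulVec p.1 = M.mulVec p.2)).filter
          (fun p => M.mulVec p.1 = t)
          = (V.filter (fun v => M.mulVec v = t)) ×ˢ (V.filter (fun v => M.mulVec v = t)) := by
        ext p
        simp only [mem_filter, mem_product]
        constructor
        · rintro ⟨⟨⟨h1, h2⟩, h3⟩, h4⟩
          exact ⟨⟨h1, h4⟩, ⟨h2, h3 ▸ h4⟩⟩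
        · rintro ⟨⟨h1, h2⟩, ⟨h3, h4⟩⟩
          exact ⟨⟨⟨h1, h3⟩, h2.trans h4.symm⟩, h2⟩
      rw [this, card_product, sq]
    have hCS := Finset.sum_mul_sq_le_sq_mul_sq (V.image M.mulVec)
      (fun _ => 1) (fun t => (V.filter (fun v => M.mulVec v = t)).card)
    simp only [one_mul, one_pow] at hCS
    calc n^2 = (∑ t ∈ V.image M.mulVec, (V.filter (fun v => M.mulVec v = t)).card)^2 := by
          rw [← hfib, hV]
      _ ≤ (∑ t ∈ V.image M.mulVec, 1) *
            ∑ t ∈ V.image M.mulVec, ((V.filter (fun v => M.mulVec v = t)).card)^2 := hCS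
      _ = r M * c M := by rw [sum_const, smul_eq_mul, mul_one, hfib2]
  have hcsum : ∑ M ∈ 𝒜, c M ≤ 2 * n^2 := by
    set E : Matrix (Fin k) (Fin k) ℝ → Finset ((Fin k → ℝ) × (Fin k → ℝ)) :=
      fun M => (V ×ˢ V).filter (fun p => (M.mulVec p.1 = M.mulVec p.2) ∧ p.1 ≠ p.2) with hE
    have hsplit : ∀ M, c M ≤ n + (E M).card := by
      intro M
      have := Finset.card_filter_add_card_filter_not
        (s := (V ×ˢ V).filter (fun p => M.mulVec p.1 = M.mulVec p.2))
        (p := fun p => p.1 = p.2)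
      have hdiag : (((V ×ˢ V).filter (fun p => M.mulVec p.1 = M.mulVec p.2)).filter
          (fun p => p.1 = p.2)).card ≤ n := by
        rw [← hV]
        apply card_le_card_of_injOn (fun p => p.1)
        · intro p hp
          exact (mem_product.mp (mem_filter.mp (mem_filter.mp hp).1).1).1
        · intro p hp q hq hpq
          have hp2 := (mem_filter.mp hp).2
          have hq2 := (mem_filter.mp hq).2
          have hpq' : p.1 = q.1 := hpq
          exact Prod.ext hpq' (by rw [← hp2, ← hq2, hpq'])
      have hoff : (((V ×ˢ V).filter (fun p => M.mulVec p.1 = M.mulVec p.2)).filter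
          (fun p => ¬ p.1 = p.2)).card = (E M).card := by
        show _ = ((V ×ˢ V).filter (fun p => M.mulVec p.1 = M.mulVec p.2 ∧ p.1 ≠ p.2)).card
        rw [Finset.filter_filter]
      have h2 : c M = (((V ×ˢ V).filter (fun p => M.mulVec p.1 = M.mulVec p.2)).filter
          (fun p => p.1 = p.2)).card + (E M).card := by
        rw [← hoff]
        exact this.symm
      rw [h2]
      omega
    have hdisj : ∀ M ∈ 𝒜, ∀ M' ∈ 𝒜, M ≠ M' → Disjoint (E M) (E M') := by
      intro M hM M' hM' hne
      rw [Finset.disjoint_left]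
      intro p hp hp'
      have h1 := (mem_filter.mp hp).2
      have h2 := (mem_filter.mp hp').2
      apply h1.2
      apply mulVec_inj (hdet M hM M' hM' hne)
      rw [Matrix.sub_mulVec, Matrix.sub_mulVec, h1.1, h2.1]
    have hbi : ∑ M ∈ 𝒜, (E M).card ≤ n^2 := by
      rw [← Finset.card_biUnion hdisj]
      calc (𝒜.biUnion E).card ≤ (V ×ˢ V).card := by
            apply card_le_card
            intro p hp
            obtain ⟨M, _, hpM⟩ := Finset.mem_biUnion.mp hp
            exact (mem_filter.mp hpM).1
        _ = n^2 := by rw [card_product, hV, sq]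
    calc ∑ M ∈ 𝒜, c M ≤ ∑ M ∈ 𝒜, (n + (E M).card) := Finset.sum_le_sum (fun M _ => hsplit M)
      _ = 𝒜.card * n + ∑ M ∈ 𝒜, (E M).card := by rw [Finset.sum_add_distrib, sum_const, smul_eq_mul]
      _ ≤ n * n + n^2 := by
            have := hbi; rw [h𝒜]; omega
      _ = 2 * n^2 := by ring
  have hcpos : ∀ M, 0 < c M := by
    intro M
    obtain ⟨v, hv⟩ := Finset.card_pos.mp (by rw [hV]; omega : 0 < V.card)
    apply Finset.card_pos.mpr
    exact ⟨(v, v), mem_filter.mpr ⟨mem_product.mpr ⟨hv, hv⟩, rfl⟩⟩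
  have hCS2 := Finset.sum_mul_sq_le_sq_mul_sq 𝒜
    (fun M => Real.sqrt (c M)) (fun M => 1 / Real.sqrt (c M))
  have hones : ∀ M ∈ 𝒜, Real.sqrt (c M) * (1 / Real.sqrt (c M)) = 1 := by
    intro M _
    have h0 : Real.sqrt (c M) ≠ 0 := by
      have := hcpos M
      positivity
    field_simp
  rw [Finset.sum_congr rfl hones] at hCS2
  simp only [sum_const, nsmul_eq_mul, smul_eq_mul, mul_one] at hCS2
  rw [h𝒜] at hCS2
  have hsq : ∀ M ∈ 𝒜, (Real.sqrt (c M))^2 = (c M : ℝ) := fun M _ => Real.sq_sqrt (by positivity)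
  have hsqi : ∀ M ∈ 𝒜, (1 / Real.sqrt (c M))^2 = 1 / (c M : ℝ) := by
    intro M hM
    rw [div_pow, one_pow, hsq M hM]
  rw [Finset.sum_congr rfl hsq, Finset.sum_congr rfl hsqi] at hCS2
  have hinv : ∀ M ∈ 𝒜, 1 / (c M : ℝ) ≤ (r M : ℝ) / (n:ℝ)^2 := by
    intro M _
    rw [div_le_div_iff₀ (by exact_mod_cast hcpos M) (by positivity)]
    have := hper M
    calc (1:ℝ) * (n:ℝ)^2 = ((n^2 : ℕ) : ℝ) := by push_cast; ring
      _ ≤ ((r M * c M : ℕ) : ℝ) := by exact_mod_cast this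
      _ = (r M : ℝ) * (c M : ℝ) := by push_cast; ring
  have hc2 : (∑ M ∈ 𝒜, (c M : ℝ)) ≤ 2 * (n:ℝ)^2 := by
    calc (∑ M ∈ 𝒜, (c M : ℝ)) = ((∑ M ∈ 𝒜, c M : ℕ) : ℝ) := by push_cast; ring
      _ ≤ ((2 * n^2 : ℕ) : ℝ) := by exact_mod_cast hcsum
      _ = 2 * (n:ℝ)^2 := by push_cast; ring
  have hfinal : (n:ℝ)^2 ≤ 2 * (n:ℝ)^2 * ((∑ M ∈ 𝒜, (r M : ℝ)) / (n:ℝ)^2) := by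
    calc (n:ℝ)^2 ≤ (∑ M ∈ 𝒜, (c M : ℝ)) * (∑ M ∈ 𝒜, 1 / (c M : ℝ)) := hCS2
      _ ≤ (2 * (n:ℝ)^2) * (∑ M ∈ 𝒜, (r M : ℝ) / (n:ℝ)^2) := by
          apply mul_le_mul hc2 (Finset.sum_le_sum hinv) ?_ (by positivity)
          apply Finset.sum_nonneg
          intro M hM
          positivity
      _ = 2 * (n:ℝ)^2 * ((∑ M ∈ 𝒜, (r M : ℝ)) / (n:ℝ)^2) := by rw [Finset.sum_div]
  have hn2 : (0:ℝ) < (n:ℝ)^2 := by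
    have : (1:ℝ) ≤ (n:ℝ) := by exact_mod_cast hn
    positivity
  have heq : 2 * (n:ℝ)^2 * ((∑ M ∈ 𝒜, (r M : ℝ)) / (n:ℝ)^2) = 2 * ∑ M ∈ 𝒜, (r M : ℝ) := by
    field_simp
  show ((n : ℝ))^2 ≤ 2 * ∑ M ∈ 𝒜, (r M : ℝ)
  rw [← heq]
  exact hfinal
private lemma key_count {k n : ℕ} (hn : 1 ≤ n) (A ε : ℝ) (hA : 0 < A) (hε : 0 < ε)
    (hinc : ∀ (P : Finset ((Fin k → ℝ) × (Fin k → ℝ)))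
      (L : Finset (Set ((Fin k → ℝ) × (Fin k → ℝ)))),
      (∀ ℓ ∈ L, ∃ s : AffineSubspace ℝ ((Fin k → ℝ) × (Fin k → ℝ)),
        ℓ = (s : Set ((Fin k → ℝ) × (Fin k → ℝ))) ∧ Module.finrank ℝ s.direction = k) →
      (∀ ℓ ∈ L, ∀ ℓ' ∈ L, ℓ ≠ ℓ' → (ℓ ∩ ℓ' : Set ((Fin k → ℝ) × (Fin k → ℝ))).Subsingleton) →
      (({q : ((Fin k → ℝ) × (Fin k → ℝ)) × Set ((Fin k → ℝ) × (Fin k → ℝ)) |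
          q.1 ∈ P ∧ q.2 ∈ L ∧ q.1 ∈ q.2}).ncard : ℝ) ≤
        A * (P.card : ℝ) ^ ((2 : ℝ) / 3 + ε) * (L.card : ℝ) ^ ((2 : ℝ) / 3)
          + 3 / 2 * P.card + 3 / 2 * L.card)
    (𝒜 : Finset (Matrix (Fin k) (Fin k) ℝ)) (V W : Finset (Fin k → ℝ))
    (h𝒜 : 𝒜.card = n) (hV : V.card = n) (hW : W.card = n)
    (hdet : ∀ M ∈ 𝒜, ∀ M' ∈ 𝒜, M ≠ M' → (M - M').det ≠ 0) :
    ((n:ℝ))^3 / 2 ≤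
      A * (((Finset.image₂ (· + ·) V W).card : ℝ) *
        ((Finset.image₂ (fun (M : Matrix (Fin k) (Fin k) ℝ) w => M.mulVec w) 𝒜 W).card : ℝ))
          ^ ((2:ℝ)/3 + ε) * (((n:ℝ))^2) ^ ((2:ℝ)/3)
      + 3/2 * (((Finset.image₂ (· + ·) V W).card : ℝ) *
        ((Finset.image₂ (fun (M : Matrix (Fin k) (Fin k) ℝ) w => M.mulVec w) 𝒜 W).card : ℝ))
      + 3/2 * ((n:ℝ))^2 := by
  classical
  set SW := Finset.image₂ (· + ·) V W with hSW
  set TW := Finset.image₂ (fun (M : Matrix (Fin k) (Fin k) ℝ) w => M.mulVec w) 𝒜 W with hTW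
  set P := SW ×ˢ TW with hP
  set D0 := 𝒜.sigma (fun M => V.image M.mulVec) with hD0
  set L := D0.image (fun q => ellSet q.1 q.2) with hL
  have hflats : ∀ ℓ ∈ L, ∃ s : AffineSubspace ℝ ((Fin k → ℝ) × (Fin k → ℝ)),
      ℓ = (s : Set ((Fin k → ℝ) × (Fin k → ℝ))) ∧ Module.finrank ℝ s.direction = k := by
    intro ℓ hℓ
    obtain ⟨⟨M, t⟩, _, rfl⟩ := Finset.mem_image.mp hℓ
    exact ellSet_affine M t
  have hsub : ∀ ℓ ∈ L, ∀ ℓ' ∈ L, ℓ ≠ ℓ' →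
      (ℓ ∩ ℓ' : Set ((Fin k → ℝ) × (Fin k → ℝ))).Subsingleton := by
    intro ℓ hℓ ℓ' hℓ' hne
    obtain ⟨⟨M, t⟩, hMt, rfl⟩ := Finset.mem_image.mp hℓ
    obtain ⟨⟨M', t'⟩, hMt', rfl⟩ := Finset.mem_image.mp hℓ'
    have hM : M ∈ 𝒜 := (Finset.mem_sigma.mp hMt).1
    have hM' : M' ∈ 𝒜 := (Finset.mem_sigma.mp hMt').1
    apply ellSet_inter
    · intro hMM htt
      exact hne (by rw [hMM, htt])
    · intro hMM
      exact hdet M hM M' hM' hMM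
  have hJ := hinc P L hflats hsub
  have hset : {q : ((Fin k → ℝ) × (Fin k → ℝ)) × Set ((Fin k → ℝ) × (Fin k → ℝ)) |
      q.1 ∈ P ∧ q.2 ∈ L ∧ q.1 ∈ q.2} = ↑((P ×ˢ L).filter (fun q => q.1 ∈ q.2)) := by
    ext q
    simp only [Set.mem_setOf_eq, Finset.coe_filter, Finset.mem_product]
    tauto
  rw [hset, Set.ncard_coe_finset] at hJ
  -- the choice function
  set g : Matrix (Fin k) (Fin k) ℝ → (Fin k → ℝ) → (Fin k → ℝ) :=
    fun M t => if h : ∃ v ∈ V, M.mulVec v = t then h.choose else 0 with hgdef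
  have hg : ∀ M : Matrix (Fin k) (Fin k) ℝ, ∀ t ∈ V.image M.mulVec,
      g M t ∈ V ∧ M.mulVec (g M t) = t := by
    intro M t ht
    obtain ⟨v, hv, hvt⟩ := Finset.mem_image.mp ht
    have hex : ∃ v ∈ V, M.mulVec v = t := ⟨v, hv, hvt⟩
    simp only [hgdef, dif_pos hex]
    exact ⟨hex.choose_spec.1, hex.choose_spec.2⟩
  -- injection
  set f : ((Σ _ : Matrix (Fin k) (Fin k) ℝ, (Fin k → ℝ)) × (Fin k → ℝ)) →
      ((Fin k → ℝ) × (Fin k → ℝ)) × Set ((Fin k → ℝ) × (Fin k → ℝ)) :=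
    fun q => ((g q.1.1 q.1.2 + q.2, q.1.1.mulVec q.2), ellSet q.1.1 q.1.2) with hfdef
  have hmaps : ∀ q ∈ D0 ×ˢ W, f q ∈ (P ×ˢ L).filter (fun q => q.1 ∈ q.2) := by
    rintro ⟨⟨M, t⟩, w⟩ hq
    rw [Finset.mem_product] at hq
    obtain ⟨hMt, hw⟩ := hq
    have hM : M ∈ 𝒜 := (Finset.mem_sigma.mp hMt).1
    have ht : t ∈ V.image M.mulVec := (Finset.mem_sigma.mp hMt).2
    obtain ⟨hgV, hgt⟩ := hg M t ht
    refine Finset.mem_filter.mpr ⟨Finset.mem_product.mpr ⟨Finset.mem_product.mpr ⟨?_, ?_⟩, ?_⟩, ?_⟩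
    · exact Finset.mem_image₂.mpr ⟨_, hgV, _, hw, rfl⟩
    · exact Finset.mem_image₂.mpr ⟨M, hM, w, hw, rfl⟩
    · exact Finset.mem_image.mpr ⟨⟨M, t⟩, hMt, rfl⟩
    · show (g M t + w, M.mulVec w) ∈ ellSet M t
      rw [mem_ellSet]
      show M.mulVec w = M.mulVec (g M t + w) - t
      rw [Matrix.mulVec_add, hgt]
      abel
  have hinj : Set.InjOn f ↑(D0 ×ˢ W) := by
    rintro ⟨⟨M, t⟩, w⟩ h1 ⟨⟨M', t'⟩, w'⟩ h2 heq
    simp only [hfdef, Prod.mk.injEq] at heq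
    obtain ⟨⟨h3, h4⟩, h5⟩ := heq
    obtain ⟨hMM, htt⟩ := ellSet_inj h5
    subst hMM
    subst htt
    have hww : w = w' := add_left_cancel h3
    subst hww
    rfl
  have hcard : D0.card * W.card ≤ ((P ×ˢ L).filter (fun q => q.1 ∈ q.2)).card := by
    rw [← Finset.card_product]
    exact Finset.card_le_card_of_injOn f hmaps hinj
  -- lower bound on D0.card * W.card
  have hsum := sum_image_card hn 𝒜 V h𝒜 hV hdet
  have hD0card : (D0.card : ℝ) = ∑ M ∈ 𝒜, ((V.image M.mulVec).card : ℝ) := by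
    rw [hD0, Finset.card_sigma]
    push_cast
    rfl
  have hlow : ((n:ℝ))^3 / 2 ≤ ((D0.card * W.card : ℕ) : ℝ) := by
    push_cast
    rw [hD0card, hW]
    have hnn : (0:ℝ) ≤ (n:ℝ) := Nat.cast_nonneg n
    calc ((n:ℝ))^3/2 = (n:ℝ)^2/2 * (n:ℝ) := by ring
      _ ≤ (∑ M ∈ 𝒜, ((V.image M.mulVec).card : ℝ)) * (n:ℝ) := by
          apply mul_le_mul_of_nonneg_right _ hnn
          linarith
  -- upper bounds on card P and L
  have hPcard : (P.card : ℝ) = (SW.card : ℝ) * (TW.card : ℝ) := by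
    rw [hP, Finset.card_product]
    push_cast
    ring
  have hLcard : (L.card : ℝ) ≤ (n:ℝ)^2 := by
    have h1 : L.card ≤ D0.card := Finset.card_image_le
    have h2 : D0.card ≤ n * n := by
      rw [hD0, Finset.card_sigma]
      calc ∑ M ∈ 𝒜, (V.image M.mulVec).card ≤ ∑ M ∈ 𝒜, V.card :=
            Finset.sum_le_sum (fun M _ => Finset.card_image_le)
        _ = n * n := by rw [Finset.sum_const, smul_eq_mul, h𝒜, hV]
    calc (L.card : ℝ) ≤ ((n * n : ℕ) : ℝ) := by exact_mod_cast h1.trans h2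
      _ = (n:ℝ)^2 := by push_cast; ring
  have hL0 : (0:ℝ) ≤ (L.card : ℝ) := Nat.cast_nonneg _
  have hP0 : (0:ℝ) ≤ (P.card : ℝ) := Nat.cast_nonneg _
  calc ((n:ℝ))^3 / 2 ≤ ((D0.card * W.card : ℕ) : ℝ) := hlow
    _ ≤ ((((P ×ˢ L).filter (fun q => q.1 ∈ q.2)).card : ℕ) : ℝ) := by exact_mod_cast hcard
    _ ≤ A * (P.card : ℝ) ^ ((2 : ℝ) / 3 + ε) * (L.card : ℝ) ^ ((2 : ℝ) / 3)
          + 3 / 2 * P.card + 3 / 2 * L.card := hJ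
    _ ≤ A * ((SW.card : ℝ) * (TW.card : ℝ)) ^ ((2:ℝ)/3 + ε) * (((n:ℝ))^2) ^ ((2:ℝ)/3)
          + 3/2 * ((SW.card : ℝ) * (TW.card : ℝ)) + 3/2 * ((n:ℝ))^2 := by
        rw [← hPcard]
        have hb1 : (L.card : ℝ) ^ ((2:ℝ)/3) ≤ (((n:ℝ))^2) ^ ((2:ℝ)/3) :=
          Real.rpow_le_rpow hL0 hLcard (by norm_num)
        have hb2 : 3/2 * (L.card : ℝ) ≤ 3/2 * ((n:ℝ))^2 := by linarith
        have hb3 : A * (P.card : ℝ) ^ ((2:ℝ)/3 + ε) * (L.card : ℝ) ^ ((2:ℝ)/3)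
            ≤ A * (P.card : ℝ) ^ ((2:ℝ)/3 + ε) * (((n:ℝ))^2) ^ ((2:ℝ)/3) := by
          apply mul_le_mul_of_nonneg_left hb1
          positivity
        linarith

private lemma final_real (A₁ ε ε' : ℝ) (hA1 : 1 ≤ A₁) (hε : 0 < ε) (hεs : ε < 1/8)
    (hε' : ε' = 15 * ε / 8) {n : ℕ} (hn : 37 ≤ n) (S T : ℝ) (hS : 0 ≤ S) (hT : 0 ≤ T)
    (hmain : ((n:ℝ))^3 / 2 ≤ A₁ * (S * T) ^ ((2:ℝ)/3 + ε) * (((n:ℝ))^2) ^ ((2:ℝ)/3)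
      + 3/2 * (S * T) + 3/2 * ((n:ℝ))^2) :
    Real.sqrt (min (1/36) ((24 * A₁) ^ (-(3:ℝ)/2))) * (n:ℝ) ^ ((5:ℝ)/4 - ε') ≤ S + T := by
  set nR : ℝ := (n : ℝ) with hnR
  have hn37 : (37:ℝ) ≤ nR := by
    show (37:ℝ) ≤ (n:ℝ)
    exact_mod_cast hn
  have hn1 : (1:ℝ) ≤ nR := by linarith
  have hn0 : (0:ℝ) < nR := by linarith
  set a : ℝ := (2:ℝ)/3 + ε with ha
  have ha0 : 0 < a := by rw [ha]; linarith
  set c3 : ℝ := (24 * A₁) ^ (-(3:ℝ)/2) with hc3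
  have hc30 : 0 < c3 := Real.rpow_pos_of_pos (by linarith) _
  set cm : ℝ := min (1/36) c3 with hcm
  have hcm0 : 0 < cm := lt_min (by norm_num) hc30
  have hcm1 : cm ≤ 1/36 := min_le_left _ _
  -- quadratic term small
  have hq : 3/2 * nR^2 ≤ nR^3 / 6 := by nlinarith
  have hsplit : nR^3/6 ≤ A₁ * (S * T) ^ a * (nR^2) ^ ((2:ℝ)/3) ∨ nR^3/6 ≤ 3/2 * (S * T) := by
    by_contra hcon
    push_neg at hcon
    have h1 := hcon.1
    have h2 := hcon.2
    have : nR^3/2 < nR^3/6 + nR^3/6 + nR^3/6 := by linarith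
    linarith
  have hε'lt : ε' < 1/4 := by rw [hε']; linarith
  have hε'0 : 0 < ε' := by rw [hε']; linarith
  -- both cases give : cm * nR^(5/2 - 2ε') ≤ S * T
  have hST : cm * nR ^ ((5:ℝ)/2 - 2*ε') ≤ S * T := by
    rcases hsplit with hc | hc
    · -- incidence-term-dominant case
      have h43 : (nR^2) ^ ((2:ℝ)/3) = nR ^ ((4:ℝ)/3) := by
        rw [← Real.rpow_natCast nR 2, ← Real.rpow_mul (le_of_lt hn0)]
        norm_num
      rw [h43] at hc
      have hXpos : (0:ℝ) ≤ S * T := mul_nonneg hS hT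
      have hstep : nR ^ ((5:ℝ)/3) / (6 * A₁) ≤ (S * T) ^ a := by
        rw [div_le_iff₀ (by linarith)]
        have hns : nR ^ (3:ℝ) = nR ^ ((4:ℝ)/3) * nR ^ ((5:ℝ)/3) := by
          rw [← Real.rpow_add hn0]; norm_num
        have hnr3 : nR^3 = nR ^ (3:ℝ) := by
          rw [← Real.rpow_natCast nR 3]; norm_num
        have h6 : nR ^ ((4:ℝ)/3) * nR ^ ((5:ℝ)/3) ≤ 6 * (A₁ * (S * T) ^ a * nR ^ ((4:ℝ)/3)) := by
          rw [← hns, ← hnr3]; linarith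
        have hpow43 : 0 < nR ^ ((4:ℝ)/3) := Real.rpow_pos_of_pos hn0 _
        have h7 : nR ^ ((5:ℝ)/3) * nR ^ ((4:ℝ)/3) ≤ ((S * T) ^ a * (6 * A₁)) * nR ^ ((4:ℝ)/3) := by
          calc nR ^ ((5:ℝ)/3) * nR ^ ((4:ℝ)/3) = nR ^ ((4:ℝ)/3) * nR ^ ((5:ℝ)/3) := by ring
            _ ≤ 6 * (A₁ * (S * T) ^ a * nR ^ ((4:ℝ)/3)) := h6
            _ = ((S * T) ^ a * (6 * A₁)) * nR ^ ((4:ℝ)/3) := by ring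
        exact le_of_mul_le_mul_right h7 hpow43
      -- raise to power 1/a
      have hmono := Real.rpow_le_rpow (by positivity) hstep (le_of_lt (by positivity : (0:ℝ) < 1/a))
      have hback : ((S * T) ^ a) ^ ((1:ℝ)/a) = S * T := by
        rw [← Real.rpow_mul hXpos, mul_one_div, div_self (ne_of_gt ha0), Real.rpow_one]
      rw [hback] at hmono
      have hlhs : (nR ^ ((5:ℝ)/3) / (6 * A₁)) ^ ((1:ℝ)/a)
          = (nR ^ ((5:ℝ)/3)) ^ ((1:ℝ)/a) / (6 * A₁) ^ ((1:ℝ)/a) := by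
        exact Real.div_rpow (by positivity) (by linarith) _
      rw [hlhs] at hmono
      have hnum : nR ^ ((5:ℝ)/2 - 2*ε') ≤ (nR ^ ((5:ℝ)/3)) ^ ((1:ℝ)/a) := by
        rw [← Real.rpow_mul (le_of_lt hn0)]
        apply Real.rpow_le_rpow_of_exponent_le hn1
        rw [hε', ha, mul_one_div, le_div_iff₀ (by linarith : (0:ℝ) < 2/3 + ε)]
        nlinarith [sq_nonneg ε]
      have hden : (6 * A₁) ^ ((1:ℝ)/a) ≤ (24 * A₁) ^ ((3:ℝ)/2) := by
        calc (6 * A₁) ^ ((1:ℝ)/a) ≤ (24 * A₁) ^ ((1:ℝ)/a) := by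
              apply Real.rpow_le_rpow (by linarith) (by linarith) (by positivity)
          _ ≤ (24 * A₁) ^ ((3:ℝ)/2) := by
              apply Real.rpow_le_rpow_of_exponent_le (by linarith)
              rw [div_le_div_iff₀ ha0 (by norm_num)]
              rw [ha]; linarith
      have hdenpos : (0:ℝ) < (6 * A₁) ^ ((1:ℝ)/a) := Real.rpow_pos_of_pos (by linarith) _
      have hc3eq : c3 = ((24 * A₁) ^ ((3:ℝ)/2))⁻¹ := by
        rw [hc3, ← Real.rpow_neg (by linarith)]
        norm_num
      have h24pos : (0:ℝ) < (24 * A₁) ^ ((3:ℝ)/2) := Real.rpow_pos_of_pos (by linarith) _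
      calc cm * nR ^ ((5:ℝ)/2 - 2*ε') ≤ c3 * nR ^ ((5:ℝ)/2 - 2*ε') := by
            apply mul_le_mul_of_nonneg_right (min_le_right _ _) (by positivity)
        _ = nR ^ ((5:ℝ)/2 - 2*ε') / (24 * A₁) ^ ((3:ℝ)/2) := by
            rw [hc3eq]; ring
        _ ≤ (nR ^ ((5:ℝ)/3)) ^ ((1:ℝ)/a) / (6 * A₁) ^ ((1:ℝ)/a) := by
            apply div_le_div₀ (by positivity) hnum hdenpos hden
        _ ≤ S * T := hmono
    · -- linear-term-dominant case
      have h1 : nR^3 / 9 ≤ S * T := by linarith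
      have h2 : nR ^ ((5:ℝ)/2 - 2*ε') ≤ nR ^ (3:ℝ) := by
        apply Real.rpow_le_rpow_of_exponent_le hn1
        linarith
      have h3 : nR ^ (3:ℝ) = nR^3 := by
        rw [← Real.rpow_natCast nR 3]; norm_num
      calc cm * nR ^ ((5:ℝ)/2 - 2*ε') ≤ (1/36) * nR^3 := by
            apply mul_le_mul hcm1 (by rw [← h3]; exact h2) (by positivity) (by norm_num)
        _ ≤ nR^3/9 := by nlinarith
        _ ≤ S * T := h1
  -- conclude via AM-GM
  set u : ℝ := Real.sqrt cm with hu
  have hu0 : 0 ≤ u := Real.sqrt_nonneg _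
  have hu2 : u^2 = cm := Real.sq_sqrt (le_of_lt hcm0)
  have hx2 : (nR ^ ((5:ℝ)/4 - ε'))^2 = nR ^ ((5:ℝ)/2 - 2*ε') := by
    rw [← Real.rpow_natCast (nR ^ ((5:ℝ)/4 - ε')) 2, ← Real.rpow_mul (le_of_lt hn0)]
    norm_num
    ring_nf
  have hkey : (u * nR ^ ((5:ℝ)/4 - ε'))^2 ≤ (S + T)^2 := by
    have e1 : (u * nR ^ ((5:ℝ)/4 - ε'))^2 = u^2 * (nR ^ ((5:ℝ)/4 - ε'))^2 := by ring
    rw [e1, hu2, hx2]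
    nlinarith [hST, sq_nonneg (S - T), mul_nonneg hS hT]
  have hux : 0 ≤ u * nR ^ ((5:ℝ)/4 - ε') := by positivity
  nlinarith [hkey, hux, add_nonneg hS hT]
private lemma card_add_ge {k n : ℕ} (hn : 1 ≤ n) (V W : Finset (Fin k → ℝ))
    (hV : V.card = n) (hW : W.card = n) :
    (n : ℝ) ≤ ((Finset.image₂ (· + ·) V W).card : ℝ) := by
  obtain ⟨v, hv⟩ := Finset.card_pos.mp (by omega : 0 < V.card)
  have h1 : (W.image (v + ·)).card = n := by
    rw [Finset.card_image_of_injective _ (add_right_injective v), hW]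
  have h2 : W.image (v + ·) ⊆ Finset.image₂ (· + ·) V W := by
    intro x hx
    obtain ⟨w, hw, rfl⟩ := Finset.mem_image.mp hx
    exact Finset.mem_image₂.mpr ⟨v, hv, w, hw, rfl⟩
  exact_mod_cast h1 ▸ Finset.card_le_card h2

/-- A Szemerédi–Trotter type bound for `k`-flats implies a sum–product bound for matrices. -/
theorem stmt6 {k : ℕ} (hk : 1 ≤ k) (A ε : ℝ) (hA : 0 < A) (hε : 0 < ε)
    (hinc : ∀ (P : Finset ((Fin k → ℝ) × (Fin k → ℝ)))
      (L : Finset (Set ((Fin k → ℝ) × (Fin k → ℝ)))),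
      (∀ ℓ ∈ L, ∃ s : AffineSubspace ℝ ((Fin k → ℝ) × (Fin k → ℝ)),
        ℓ = (s : Set ((Fin k → ℝ) × (Fin k → ℝ))) ∧ Module.finrank ℝ s.direction = k) →
      (∀ ℓ ∈ L, ∀ ℓ' ∈ L, ℓ ≠ ℓ' → (ℓ ∩ ℓ' : Set ((Fin k → ℝ) × (Fin k → ℝ))).Subsingleton) →
      (({q : ((Fin k → ℝ) × (Fin k → ℝ)) × Set ((Fin k → ℝ) × (Fin k → ℝ)) |
          q.1 ∈ P ∧ q.2 ∈ L ∧ q.1 ∈ q.2}).ncard : ℝ) ≤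
        A * (P.card : ℝ) ^ ((2 : ℝ) / 3 + ε) * (L.card : ℝ) ^ ((2 : ℝ) / 3)
          + 3 / 2 * P.card + 3 / 2 * L.card) :
    ∃ ε' c : ℝ, 0 < ε' ∧ ε' ≤ 2 * ε ∧ 0 < c ∧
      ∀ (n : ℕ) (𝒜 : Finset (Matrix (Fin k) (Fin k) ℝ)) (V W : Finset (Fin k → ℝ)),
        𝒜.card = n → V.card = n → W.card = n →
        (∀ A' ∈ 𝒜, ∀ B ∈ 𝒜, A' ≠ B → (A' - B).det ≠ 0) →
        c * (n : ℝ) ^ ((5 : ℝ) / 4 - ε') ≤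
          ((Finset.image₂ (· + ·) V W).card : ℝ) +
            ((Finset.image₂ (fun (A' : Matrix (Fin k) (Fin k) ℝ) w => A'.mulVec w) 𝒜 W).card : ℝ) := by
  classical
  by_cases hcase : (1/8 : ℝ) ≤ ε
  · -- trivial regime
    refine ⟨1/4, 1, by norm_num, by linarith, by norm_num, ?_⟩
    intro n 𝒜 V W h𝒜 hV hW hdet
    rcases Nat.eq_zero_or_pos n with rfl | hn
    · rw [Nat.cast_zero, Real.zero_rpow (by norm_num), mul_zero]
      positivity
    · have hS := card_add_ge hn V W hV hW
      have he : ((5:ℝ)/4 - 1/4) = 1 := by norm_num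
      rw [he, Real.rpow_one, one_mul]
      have hT : (0:ℝ) ≤ ((Finset.image₂ (fun (A' : Matrix (Fin k) (Fin k) ℝ) w =>
          A'.mulVec w) 𝒜 W).card : ℝ) := Nat.cast_nonneg _
      linarith
  · push_neg at hcase
    have hA1 : 1 ≤ max A 1 := le_max_right _ _
    have hc30 : 0 < (24 * max A 1 : ℝ) ^ (-(3:ℝ)/2) := Real.rpow_pos_of_pos (by linarith) _
    have hcm0 : 0 < min (1/36 : ℝ) ((24 * max A 1 : ℝ) ^ (-(3:ℝ)/2)) := lt_min (by norm_num) hc30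
    have hε'0 : 0 < 15 * ε / 8 := by linarith
    have hε'lt : 15 * ε / 8 < 1/4 := by linarith
    refine ⟨15 * ε / 8,
      min (Real.sqrt (min (1/36 : ℝ) ((24 * max A 1 : ℝ) ^ (-(3:ℝ)/2)))) ((36:ℝ) ^ (15 * ε / 8 - 1/4)),
      hε'0, by linarith, lt_min (Real.sqrt_pos.mpr hcm0) (Real.rpow_pos_of_pos (by norm_num) _), ?_⟩
    intro n 𝒜 V W h𝒜 hV hW hdet
    set c : ℝ := min (Real.sqrt (min (1/36 : ℝ) ((24 * max A 1 : ℝ) ^ (-(3:ℝ)/2))))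
      ((36:ℝ) ^ (15 * ε / 8 - 1/4)) with hcdef
    rcases Nat.eq_zero_or_pos n with rfl | hn
    · rw [Nat.cast_zero, Real.zero_rpow (by intro h; nlinarith), mul_zero]
      positivity
    by_cases hsmall : n ≤ 36
    · have hS := card_add_ge hn V W hV hW
      have hT : (0:ℝ) ≤ ((Finset.image₂ (fun (A' : Matrix (Fin k) (Fin k) ℝ) w =>
          A'.mulVec w) 𝒜 W).card : ℝ) := Nat.cast_nonneg _
      have hn0 : (0:ℝ) < (n:ℝ) := by exact_mod_cast hn
      have hb : c * (n:ℝ) ^ ((5:ℝ)/4 - 15 * ε / 8) ≤ (n : ℝ) := by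
        have h1 : c ≤ (36:ℝ) ^ (15 * ε / 8 - 1/4) := min_le_right _ _
        have he : (5:ℝ)/4 - 15 * ε / 8 = 1 + ((1:ℝ)/4 - 15 * ε / 8) := by ring
        have h3 : (n:ℝ) ^ ((1:ℝ)/4 - 15 * ε / 8) ≤ (36:ℝ) ^ ((1:ℝ)/4 - 15 * ε / 8) :=
          Real.rpow_le_rpow (le_of_lt hn0) (by exact_mod_cast hsmall) (by linarith)
        have h4 : (36:ℝ) ^ (15 * ε / 8 - 1/4) * (36:ℝ) ^ ((1:ℝ)/4 - 15 * ε / 8) = 1 := by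
          rw [← Real.rpow_add (by norm_num)]
          norm_num
        have h5 : (0:ℝ) ≤ (36:ℝ) ^ (15 * ε / 8 - 1/4) := by positivity
        calc c * (n:ℝ) ^ ((5:ℝ)/4 - 15 * ε / 8)
            ≤ (36:ℝ) ^ (15 * ε / 8 - 1/4) * (n:ℝ) ^ ((5:ℝ)/4 - 15 * ε / 8) := by
              apply mul_le_mul_of_nonneg_right h1 (by positivity)
          _ = (36:ℝ) ^ (15 * ε / 8 - 1/4) * ((n:ℝ) * (n:ℝ) ^ ((1:ℝ)/4 - 15 * ε / 8)) := by
              rw [he, Real.rpow_add hn0, Real.rpow_one]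
          _ ≤ (36:ℝ) ^ (15 * ε / 8 - 1/4) * ((n:ℝ) * (36:ℝ) ^ ((1:ℝ)/4 - 15 * ε / 8)) := by
              apply mul_le_mul_of_nonneg_left _ h5
              exact mul_le_mul_of_nonneg_left h3 (le_of_lt hn0)
          _ = ((36:ℝ) ^ (15 * ε / 8 - 1/4) * (36:ℝ) ^ ((1:ℝ)/4 - 15 * ε / 8)) * (n:ℝ) := by ring
          _ = (n:ℝ) := by rw [h4, one_mul]
      linarith
    · -- main regime
      push_neg at hsmall
      have hn37 : 37 ≤ n := hsmall
      have hkc := key_count hn A ε hA hε hinc 𝒜 V W h𝒜 hV hW hdet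
      set S : ℝ := ((Finset.image₂ (· + ·) V W).card : ℝ) with hSdef
      set T : ℝ := ((Finset.image₂ (fun (M : Matrix (Fin k) (Fin k) ℝ) w =>
        M.mulVec w) 𝒜 W).card : ℝ) with hTdef
      have hS0 : 0 ≤ S := Nat.cast_nonneg _
      have hT0 : 0 ≤ T := Nat.cast_nonneg _
      have hmain1 : ((n:ℝ))^3 / 2 ≤ (max A 1) * (S * T) ^ ((2:ℝ)/3 + ε) * (((n:ℝ))^2) ^ ((2:ℝ)/3)
          + 3/2 * (S * T) + 3/2 * ((n:ℝ))^2 := by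
        have hAle : A ≤ max A 1 := le_max_left _ _
        have hx : A * (S * T) ^ ((2:ℝ)/3 + ε) * (((n:ℝ))^2) ^ ((2:ℝ)/3)
            ≤ (max A 1) * (S * T) ^ ((2:ℝ)/3 + ε) * (((n:ℝ))^2) ^ ((2:ℝ)/3) := by
          apply mul_le_mul_of_nonneg_right _ (by positivity)
          exact mul_le_mul_of_nonneg_right hAle (by positivity)
        linarith [hkc]
      have hfr := final_real (max A 1) ε (15 * ε / 8) hA1 hε hcase rfl hn37 S T hS0 hT0 hmain1
      calc c * (n:ℝ) ^ ((5:ℝ)/4 - 15 * ε / 8)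
          ≤ Real.sqrt (min (1/36 : ℝ) ((24 * max A 1 : ℝ) ^ (-(3:ℝ)/2)))
            * (n:ℝ) ^ ((5:ℝ)/4 - 15 * ε / 8) := by
            apply mul_le_mul_of_nonneg_right (min_le_left _ _) (by positivity)
        _ ≤ S + T := hfr
end

section
/- Two distinct complex unit circles in ℂ² intersect in at most two points, where a complex unit circle is a set {(z,w) ∈ ℂ² : (z−z₀)² + (w−w₀)² = 1} for some (z₀,w₀) ∈ ℂ². -/
lemma stmt18_aux (z0 w0 z0' w0' : ℂ) (h : ¬(z0 = z0' ∧ w0 = w0'))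
    (pz pw qz qw sz sw : ℂ)
    (hp1 : (pz - z0) ^ 2 + (pw - w0) ^ 2 = 1)
    (hp2 : (pz - z0') ^ 2 + (pw - w0') ^ 2 = 1)
    (hq1 : (qz - z0) ^ 2 + (qw - w0) ^ 2 = 1)
    (hq2 : (qz - z0') ^ 2 + (qw - w0') ^ 2 = 1)
    (hs1 : (sz - z0) ^ 2 + (sw - w0) ^ 2 = 1)
    (hs2 : (sz - z0') ^ 2 + (sw - w0') ^ 2 = 1) :
    (pz = qz ∧ pw = qw) ∨ (pz = sz ∧ pw = sw) ∨ (qz = sz ∧ qw = sw) := by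
  by_contra hcon
  have hpq : ¬(pz = qz ∧ pw = qw) := fun h' => hcon (Or.inl h')
  have hps : ¬(pz = sz ∧ pw = sw) := fun h' => hcon (Or.inr (Or.inl h'))
  have hqs : ¬(qz = sz ∧ qw = sw) := fun h' => hcon (Or.inr (Or.inr h'))
  have hu : (z0' - z0) * (qz - pz) + (w0' - w0) * (qw - pw) = 0 := by
    linear_combination (hq1 - hq2 - hp1 + hp2) / 2
  have hv : (z0' - z0) * (sz - pz) + (w0' - w0) * (sw - pw) = 0 := by
    linear_combination (hs1 - hs2 - hp1 + hp2) / 2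
  have hdet : (qz - pz) * (sw - pw) - (qw - pw) * (sz - pz) = 0 := by
    have hab : z0' - z0 ≠ 0 ∨ w0' - w0 ≠ 0 := by
      by_contra hc
      push_neg at hc
      exact h ⟨by linear_combination -hc.1, by linear_combination -hc.2⟩
    rcases hab with ha | hb
    · have h0 : (z0' - z0) * ((qz - pz) * (sw - pw) - (qw - pw) * (sz - pz)) = 0 := by
        linear_combination (sw - pw) * hu - (qw - pw) * hv
      rcases mul_eq_zero.mp h0 with h' | h'
      · exact absurd h' ha
      · exact h'
    · have h0 : (w0' - w0) * ((qz - pz) * (sw - pw) - (qw - pw) * (sz - pz)) = 0 := by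
        linear_combination (qz - pz) * hv - (sz - pz) * hu
      rcases mul_eq_zero.mp h0 with h' | h'
      · exact absurd h' hb
      · exact h'
  obtain ⟨t, hv1, hv2⟩ : ∃ t : ℂ, sz - pz = t * (qz - pz) ∧ sw - pw = t * (qw - pw) := by
    by_cases h1 : qz - pz = 0
    · have h2 : qw - pw ≠ 0 := fun h2 =>
        hpq ⟨by linear_combination -h1, by linear_combination -h2⟩
      refine ⟨(sw - pw) / (qw - pw), ?_, by field_simp⟩
      have h0 : (qw - pw) * (sz - pz) = 0 := by linear_combination -hdet + (sw - pw) * h1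
      rcases mul_eq_zero.mp h0 with h' | h'
      · exact absurd h' h2
      · rw [h', h1]; ring
    · refine ⟨(sz - pz) / (qz - pz), by field_simp, ?_⟩
      rw [div_mul_eq_mul_div, eq_div_iff h1]
      linear_combination hdet
  have ht0 : t ≠ 0 := by
    rintro rfl
    exact hps ⟨by linear_combination -hv1, by linear_combination -hv2⟩
  have ht1 : t ≠ 1 := by
    rintro rfl
    exact hqs ⟨by linear_combination -hv1, by linear_combination -hv2⟩
  have hAB : ((qz - pz) ^ 2 + (qw - pw) ^ 2)
      + 2 * ((qz - pz) * (pz - z0) + (qw - pw) * (pw - w0)) = 0 := by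
    linear_combination hq1 - hp1
  have hTT : t ^ 2 * ((qz - pz) ^ 2 + (qw - pw) ^ 2)
      + t * (2 * ((qz - pz) * (pz - z0) + (qw - pw) * (pw - w0))) = 0 := by
    linear_combination (hs1 - hp1)
      - (sz - pz + t * (qz - pz) + 2 * (pz - z0)) * hv1
      - (sw - pw + t * (qw - pw) + 2 * (pw - w0)) * hv2
  have hA : (qz - pz) ^ 2 + (qw - pw) ^ 2 = 0 := by
    have h0 : t * ((t - 1) * ((qz - pz) ^ 2 + (qw - pw) ^ 2)) = 0 := by
      linear_combination hTT - t * hAB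
    rcases mul_eq_zero.mp h0 with h' | h'
    · exact absurd h' ht0
    · rcases mul_eq_zero.mp h' with h'' | h''
      · exact absurd (by linear_combination h'') ht1
      · exact h''
  have hB : (qz - pz) * (pz - z0) + (qw - pw) * (pw - w0) = 0 := by
    linear_combination (hAB - hA) / 2
  have hz : (qz - pz) ^ 2 = 0 := by
    linear_combination (-(qz - pz) ^ 2) * hp1 + (pw - w0) ^ 2 * hA
      + ((qz - pz) * (pz - z0) - (qw - pw) * (pw - w0)) * hB
  have hu1 : qz - pz = 0 := by
    exact sq_eq_zero_iff.mp hz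
  have hw : (qw - pw) ^ 2 = 0 := by linear_combination hA - hz
  have hu2 : qw - pw = 0 := sq_eq_zero_iff.mp hw
  exact hpq ⟨by linear_combination -hu1, by linear_combination -hu2⟩

/-- Two distinct complex unit circles in `ℂ²` intersect in at most two points. -/
theorem stmt18 (c c' : ℂ × ℂ) (h : c ≠ c') :
    ∀ p ∈ ({q : ℂ × ℂ | (q.1 - c.1) ^ 2 + (q.2 - c.2) ^ 2 = 1} ∩
            {q : ℂ × ℂ | (q.1 - c'.1) ^ 2 + (q.2 - c'.2) ^ 2 = 1}),
    ∀ q ∈ ({q : ℂ × ℂ | (q.1 - c.1) ^ 2 + (q.2 - c.2) ^ 2 = 1} ∩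
            {q : ℂ × ℂ | (q.1 - c'.1) ^ 2 + (q.2 - c'.2) ^ 2 = 1}),
    ∀ s ∈ ({q : ℂ × ℂ | (q.1 - c.1) ^ 2 + (q.2 - c.2) ^ 2 = 1} ∩
            {q : ℂ × ℂ | (q.1 - c'.1) ^ 2 + (q.2 - c'.2) ^ 2 = 1}),
    p = q ∨ p = s ∨ q = s := by
  intro p hp q hq s hs
  obtain ⟨hp1, hp2⟩ := hp
  obtain ⟨hq1, hq2⟩ := hq
  obtain ⟨hs1, hs2⟩ := hs
  simp only [Set.mem_setOf_eq] at hp1 hp2 hq1 hq2 hs1 hs2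
  have hc : ¬(c.1 = c'.1 ∧ c.2 = c'.2) := fun h' => h (Prod.ext h'.1 h'.2)
  rcases stmt18_aux c.1 c.2 c'.1 c'.2 hc p.1 p.2 q.1 q.2 s.1 s.2
      hp1 hp2 hq1 hq2 hs1 hs2 with ⟨h1, h2⟩ | ⟨h1, h2⟩ | ⟨h1, h2⟩
  · exact Or.inl (Prod.ext h1 h2)
  · exact Or.inr (Or.inl (Prod.ext h1 h2))
  · exact Or.inr (Or.inr (Prod.ext h1 h2))
end
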